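/- A G-graded commutative ring R is a Gelfand graded ring if and only if for any two disjoint Zariski closed subsets F, F' of GMax(R), there exist homogeneous elements r, r' ∈ h(R) with rr' = 0, r ∉ ⋃_{M∈F} M and r' ∉ ⋃_{M'∈F'} M'. -/

import Mathlib

section GradedGelfand

variable {G : Type*} [AddGroup G] [DecidableEq G] {R : Type*} [CommRing R]
variable (𝒜 : G → AddSubgroup R) [GradedRing 𝒜]

/-- A homogeneous (graded) prime ideal: a proper graded ideal that is prime
with respect to homogeneous elements. -/
def IsGradedPrime (P : Ideal R) : Prop :=
  P.IsHomogeneous 𝒜 ∧ P ≠ ⊤ ∧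
    ∀ a b : R, SetLike.IsHomogeneousElem 𝒜 a → SetLike.IsHomogeneousElem 𝒜 b →
      a * b ∈ P → a ∈ P ∨ b ∈ P

/-- A graded maximal ideal: a proper graded ideal maximal among proper graded ideals. -/
def IsGradedMaximal (M : Ideal R) : Prop :=
  M.IsHomogeneous 𝒜 ∧ M ≠ ⊤ ∧
    ∀ J : Ideal R, J.IsHomogeneous 𝒜 → M ≤ J → J ≠ ⊤ → J = M

/-- The homogeneous prime spectrum of a graded ring. -/
def GSpec := { P : Ideal R // IsGradedPrime 𝒜 P }

/-- The Zariski topology on the homogeneous prime spectrum, generated by the basic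
open sets `D_G(r)` for homogeneous `r`; the closed sets are exactly the `V_G(I)`
for graded ideals `I`. -/
instance : TopologicalSpace (GSpec 𝒜) :=
  TopologicalSpace.generateFrom
    { U | ∃ r : R, SetLike.IsHomogeneousElem 𝒜 r ∧ U = { P : GSpec 𝒜 | r ∉ P.1 } }

/-- The set of graded maximal ideals inside the homogeneous prime spectrum. -/
def GMax : Set (GSpec 𝒜) := { P | IsGradedMaximal 𝒜 P.1 }

/-- A Gelfand graded ring: every homogeneous prime ideal is contained in a unique
graded maximal ideal. -/
def IsGelfandGraded : Prop :=
  ∀ P : Ideal R, IsGradedPrime 𝒜 P →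
    ∃! M : Ideal R, IsGradedMaximal 𝒜 M ∧ P ≤ M

/-- A pm⁺ graded ring: for every homogeneous prime `P`, the homogeneous primes
containing `P` form a chain. -/
def IsPMPlusGraded : Prop :=
  ∀ P Q Q' : Ideal R, IsGradedPrime 𝒜 P → IsGradedPrime 𝒜 Q → IsGradedPrime 𝒜 Q' →
    P ≤ Q → P ≤ Q' → Q ≤ Q' ∨ Q' ≤ Q

end GradedGelfand

/-! Disjoint closed sets of `GMax R` are cut out by graded ideals `I`, `J` with `I + J = R`;
taking degree-zero components gives `a ∈ I`, `b ∈ J` of degree `0` with `a + b = 1`. If no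
product `(1 + a x) (1 + b y)` with `x`, `y` of degree `0` vanished, these products would form a
multiplicative set avoided by some graded prime `P`. Then `P + (a)` and `P + (b)` are proper, and
graded maximal ideals above them are distinct (one contains `a`, the other `b`), contradicting the
Gelfand property; so `r = 1 + a x` and `r' = 1 + b y` separate the two sets. Conversely, if `P`
lies in distinct graded maximal `M`, `M'`, separating the closed points `M'` and `M` by
`r r' = 0 ∈ P` is impossible. -/

section Ideal

variable {R : Type*} [CommRing R]

theorem Ideal.disjoint_bot_iff_ne_top {I : Ideal R} :
    Disjoint (I : Set R) (⊥ : Submonoid R) ↔ I ≠ ⊤ := by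
  rw [Submonoid.coe_bot, Set.disjoint_singleton_right, Ideal.ne_top_iff_one, SetLike.mem_coe]

theorem Ideal.one_add_mul_notMem {I : Ideal R} (hI : I ≠ ⊤) {e : R} (he : e ∈ I) (z : R) :
    1 + e * z ∉ I := fun h =>
  hI ((Ideal.eq_top_iff_one I).mpr ((I.add_mem_iff_left (I.mul_mem_right z he)).mp h))

end Ideal

section HomogeneousIdeal

open DirectSum

variable {ι σ R : Type*} [DecidableEq ι] [AddMonoid ι] [CommRing R] [SetLike σ R]
  [AddSubgroupClass σ R] {𝒜 : ι → σ} [GradedRing 𝒜]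

theorem one_add_mul_mem_grade_zero {a x : R} (ha : a ∈ 𝒜 0) (hx : x ∈ 𝒜 0) :
    1 + a * x ∈ 𝒜 0 :=
  (SetLike.GradeZero.subring 𝒜).add_mem (Subring.one_mem _) (Subring.mul_mem _ ha hx)

theorem Ideal.IsHomogeneous.le_iff {I J : Ideal R} (hI : I.IsHomogeneous 𝒜) :
    I ≤ J ↔ ∀ r, SetLike.IsHomogeneousElem 𝒜 r → r ∈ I → r ∈ J := by
  classical
  refine ⟨fun h r _ hr => h hr, fun h x hx => ?_⟩
  rw [← DirectSum.sum_support_decompose 𝒜 x]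
  exact Ideal.sum_mem _ fun i _ => h _ (SetLike.isHomogeneousElem_coe _) (hI i hx)

theorem Ideal.isHomogeneous_span_singleton {r : R} (hr : SetLike.IsHomogeneousElem 𝒜 r) :
    (Ideal.span {r}).IsHomogeneous 𝒜 :=
  Ideal.homogeneous_span 𝒜 {r} (by simpa using hr)

theorem Ideal.IsHomogeneous.exists_le_maximal_disjoint (S : Set R) {I : Ideal R}
    (hI : I.IsHomogeneous 𝒜) (hIS : Disjoint (I : Set R) S) :
    ∃ M, I ≤ M ∧
      Maximal (fun J : Ideal R => J.IsHomogeneous 𝒜 ∧ Disjoint (J : Set R) S) M := by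
  refine zorn_le_nonempty₀ _ (fun c hc hchain J hJ => ?_) I ⟨hI, hIS⟩
  refine ⟨SupSet.sSup c, ⟨Ideal.IsHomogeneous.sSup fun K hK => (hc hK).1,
    Set.disjoint_left.mpr fun x hx => ?_⟩, fun _ => le_sSup⟩
  obtain ⟨K, hK, hxK⟩ := (Submodule.mem_sSup_of_directed ⟨J, hJ⟩ hchain.directedOn).mp hx
  exact Set.disjoint_left.mp (hc hK).2 hxK

theorem Ideal.IsHomogeneous.exists_one_add_mul_mem_of_sup_span_eq_top {P : Ideal R}
    (hP : P.IsHomogeneous 𝒜) {e : R} (he : e ∈ 𝒜 0) (htop : P ⊔ Ideal.span {e} = ⊤) :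
    ∃ x ∈ 𝒜 0, 1 + e * x ∈ P := by
  obtain ⟨p, hp, _, hc, hpc⟩ :=
    Submodule.mem_sup.mp (htop ▸ Submodule.mem_top : (1 : R) ∈ P ⊔ Ideal.span {e})
  obtain ⟨c, rfl⟩ := Ideal.mem_span_singleton'.mp hc
  have hdeg0 : (decompose 𝒜 p 0 : R) + decompose 𝒜 c 0 * e = 1 := by
    rw [← coe_decompose_mul_of_right_mem_zero 𝒜 he, ← AddMemClass.coe_add,
      ← DirectSum.add_apply, ← decompose_add, hpc,
      decompose_of_mem_same 𝒜 SetLike.GradedOne.one_mem]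
  refine ⟨-decompose 𝒜 c 0, neg_mem (SetLike.coe_mem _), ?_⟩
  have : 1 + e * -(decompose 𝒜 c 0 : R) = decompose 𝒜 p 0 := by linear_combination -hdeg0
  exact this ▸ hP 0 hp

theorem Ideal.IsHomogeneous.exists_add_eq_one_of_sup_eq_top {I J : Ideal R}
    (hI : I.IsHomogeneous 𝒜) (hJ : J.IsHomogeneous 𝒜) (hIJ : I ⊔ J = ⊤) :
    ∃ a b, a ∈ 𝒜 0 ∧ b ∈ 𝒜 0 ∧ a ∈ I ∧ b ∈ J ∧ a + b = 1 := by
  obtain ⟨i, hi, j, hj, hij⟩ :=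
    Submodule.mem_sup.mp (hIJ ▸ Submodule.mem_top : (1 : R) ∈ I ⊔ J)
  refine ⟨decompose 𝒜 i 0, decompose 𝒜 j 0, SetLike.coe_mem _, SetLike.coe_mem _,
    hI 0 hi, hJ 0 hj, ?_⟩
  rw [← decompose_of_mem_same 𝒜 SetLike.GradedOne.one_mem, ← hij, decompose_add,
    DirectSum.add_apply, AddMemClass.coe_add]

end HomogeneousIdeal

section GradedSpectrum

variable {G : Type*} [AddGroup G] [DecidableEq G] {R : Type*} [CommRing R]
variable {𝒜 : G → AddSubgroup R} [GradedRing 𝒜]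

theorem isGradedPrime_of_maximal_disjoint {S : Submonoid R} {P : Ideal R}
    (hP : Maximal (fun J : Ideal R => J.IsHomogeneous 𝒜 ∧ Disjoint (J : Set R) S) P) :
    IsGradedPrime 𝒜 P := by
  obtain ⟨⟨hhom, hdisj⟩, hmax⟩ := hP
  refine ⟨hhom, fun htop => Set.disjoint_left.mp hdisj (htop ▸ Submodule.mem_top) S.one_mem,
    fun u v hu hv huv => ?_⟩
  by_contra! huvP
  have meets : ∀ w, SetLike.IsHomogeneousElem 𝒜 w → w ∉ P →
      ∃ s ∈ P ⊔ Ideal.span {w}, s ∈ S := fun w hw hwP =>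
    Set.not_disjoint_iff.mp fun hd => hwP <|
      hmax ⟨hhom.sup (Ideal.isHomogeneous_span_singleton hw), hd⟩ le_sup_left
        (Ideal.mem_sup_right (Ideal.mem_span_singleton_self w))
  obtain ⟨s, hsu, hsS⟩ := meets u hu huvP.1
  obtain ⟨t, htv, htS⟩ := meets v hv huvP.2
  have hprod : (P ⊔ Ideal.span {u}) * (P ⊔ Ideal.span {v}) ≤ P := by
    rw [Ideal.sup_mul, Ideal.mul_sup, Ideal.mul_sup, Ideal.span_singleton_mul_span_singleton]
    exact sup_le (sup_le Ideal.mul_le_right Ideal.mul_le_left)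
      (sup_le Ideal.mul_le_right ((Ideal.span_singleton_le_iff_mem _).mpr huv))
  exact Set.disjoint_left.mp hdisj (hprod (Ideal.mul_mem_mul hsu htv)) (S.mul_mem hsS htS)

theorem isGradedMaximal_iff_maximal_disjoint_bot {M : Ideal R} :
    IsGradedMaximal 𝒜 M ↔
      Maximal (fun J : Ideal R =>
        J.IsHomogeneous 𝒜 ∧ Disjoint (J : Set R) (⊥ : Submonoid R)) M := by
  simp only [Maximal, Ideal.disjoint_bot_iff_ne_top]
  exact ⟨fun ⟨hM, hMtop, h⟩ =>
      ⟨⟨hM, hMtop⟩, fun J ⟨hJ, hJtop⟩ hMJ => (h J hJ hMJ hJtop).le⟩,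
    fun ⟨⟨hM, hMtop⟩, h⟩ =>
      ⟨hM, hMtop, fun J hJ hMJ hJtop => (h ⟨hJ, hJtop⟩ hMJ).antisymm hMJ⟩⟩

theorem IsGradedMaximal.isGradedPrime {M : Ideal R} (hM : IsGradedMaximal 𝒜 M) :
    IsGradedPrime 𝒜 M :=
  isGradedPrime_of_maximal_disjoint (isGradedMaximal_iff_maximal_disjoint_bot.mp hM)

theorem Ideal.IsHomogeneous.exists_isGradedMaximal_le {I : Ideal R} (hI : I.IsHomogeneous 𝒜)
    (hItop : I ≠ ⊤) : ∃ M, IsGradedMaximal 𝒜 M ∧ I ≤ M := by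
  obtain ⟨M, hIM, hM⟩ := hI.exists_le_maximal_disjoint (⊥ : Submonoid R)
    (Ideal.disjoint_bot_iff_ne_top.mpr hItop)
  exact ⟨M, isGradedMaximal_iff_maximal_disjoint_bot.mpr hM, hIM⟩

variable (𝒜) in
theorem exists_isGradedPrime_disjoint {S : Submonoid R} (hS : (0 : R) ∉ S) :
    ∃ P, IsGradedPrime 𝒜 P ∧ Disjoint (P : Set R) S := by
  obtain ⟨P, -, hP⟩ := (Ideal.IsHomogeneous.bot 𝒜).exists_le_maximal_disjoint (S : Set R)
    (by simpa using hS)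
  exact ⟨P, isGradedPrime_of_maximal_disjoint hP, hP.prop.2⟩

end GradedSpectrum

namespace GSpec

variable {G : Type*} [AddGroup G] [DecidableEq G] {R : Type*} [CommRing R]
variable {𝒜 : G → AddSubgroup R} [GradedRing 𝒜]

variable (𝒜) in
def basicOpen (r : R) : Set (GSpec 𝒜) := {P | r ∉ P.1}

variable (𝒜) in
def zeroLocus (I : Ideal R) : Set (GSpec 𝒜) := {P | I ≤ P.1}

theorem isTopologicalBasis_basicOpen :
    TopologicalSpace.IsTopologicalBasis
      {U | ∃ r : R, SetLike.IsHomogeneousElem 𝒜 r ∧ U = basicOpen 𝒜 r} where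
  exists_subset_inter := by
    rintro _ ⟨r, hr, rfl⟩ _ ⟨s, hs, rfl⟩ P hP
    refine ⟨basicOpen 𝒜 (r * s), ⟨r * s, hr.mul hs, rfl⟩, ?_, fun Q hQ => ?_⟩
    · exact fun h => (P.2.2.2 r s hr hs h).elim hP.1 hP.2
    · exact ⟨fun h => hQ (Ideal.mul_mem_right s _ h),
        fun h => hQ (Ideal.mul_mem_left _ r h)⟩
  sUnion_eq := Set.sUnion_eq_univ_iff.mpr fun P =>
    ⟨_, ⟨1, SetLike.isHomogeneousElem_one 𝒜, rfl⟩,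
      fun h => P.2.2.1 ((Ideal.eq_top_iff_one _).mpr h)⟩
  eq_generateFrom := rfl

theorem isClosed_zeroLocus {I : Ideal R} (hI : I.IsHomogeneous 𝒜) :
    IsClosed (zeroLocus 𝒜 I) := by
  have : (zeroLocus 𝒜 I)ᶜ =
      ⋃ r ∈ {r | SetLike.IsHomogeneousElem 𝒜 r ∧ r ∈ I}, basicOpen 𝒜 r := by
    ext P
    simp [zeroLocus, basicOpen, hI.le_iff, and_assoc]
  rw [← isOpen_compl_iff, this]
  exact isOpen_biUnion fun r hr => isTopologicalBasis_basicOpen.isOpen ⟨r, hr.1, rfl⟩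

theorem _root_.IsClosed.exists_eq_zeroLocus {C : Set (GSpec 𝒜)} (hC : IsClosed C) :
    ∃ I : Ideal R, I.IsHomogeneous 𝒜 ∧ C = zeroLocus 𝒜 I := by
  let s : Set R := {r | SetLike.IsHomogeneousElem 𝒜 r ∧ basicOpen 𝒜 r ⊆ Cᶜ}
  refine ⟨Ideal.span s, Ideal.homogeneous_span 𝒜 s fun r hr => hr.1, ?_⟩
  ext P
  refine ⟨fun hP => Ideal.span_le.mpr fun r hr => not_not.mp fun hrP => hr.2 hrP hP,
    fun hP => ?_⟩
  by_contra hPC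
  obtain ⟨_, ⟨r, hr, rfl⟩, hrP, hsub⟩ :=
    isTopologicalBasis_basicOpen.exists_subset_of_mem_open hPC hC.isOpen_compl
  exact hrP (hP (Ideal.subset_span ⟨hr, hsub⟩))

instance : T1Space (GMax 𝒜) where
  t1 m := isClosed_induced_iff.mpr ⟨zeroLocus 𝒜 m.1.1, isClosed_zeroLocus m.2.1, by
    ext n
    exact ⟨fun h => Subtype.ext (Subtype.ext (m.2.2.2 _ n.1.2.1 h n.1.2.2.1)),
      by rintro rfl; exact le_refl (_ : Ideal R)⟩⟩

theorem sup_eq_top_of_disjoint_gMax {I J : Ideal R} (hI : I.IsHomogeneous 𝒜)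
    (hJ : J.IsHomogeneous 𝒜)
    (h : Disjoint (Subtype.val ⁻¹' zeroLocus 𝒜 I : Set (GMax 𝒜))
      (Subtype.val ⁻¹' zeroLocus 𝒜 J)) :
    I ⊔ J = ⊤ := by
  by_contra hIJ
  obtain ⟨M, hM, hle⟩ := (hI.sup hJ).exists_isGradedMaximal_le hIJ
  exact Set.disjoint_left.mp h
    (show ⟨⟨M, hM.isGradedPrime⟩, hM⟩ ∈ Subtype.val ⁻¹' zeroLocus 𝒜 I from
      le_sup_left.trans hle)
    (le_sup_right.trans hle)

end GSpec

section Gelfand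

variable {G : Type*} [AddGroup G] [DecidableEq G] {R : Type*} [CommRing R]
variable {𝒜 : G → AddSubgroup R} [GradedRing 𝒜]

variable (𝒜) in
def oneAddMulGradeZero {a : R} (ha : a ∈ 𝒜 0) : Submonoid R where
  carrier := {r | ∃ x ∈ 𝒜 0, 1 + a * x = r}
  one_mem' := ⟨0, zero_mem _, by simp⟩
  mul_mem' := by
    rintro _ _ ⟨x, hx, rfl⟩ ⟨y, hy, rfl⟩
    let A₀ := SetLike.GradeZero.subring 𝒜
    exact ⟨x + y + a * (x * y),
      A₀.add_mem (A₀.add_mem hx hy) (A₀.mul_mem ha (A₀.mul_mem hx hy)), by ring⟩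

theorem IsGelfandGraded.sup_eq_top_or_sup_eq_top (hG : IsGelfandGraded 𝒜) {P I J : Ideal R}
    (hP : IsGradedPrime 𝒜 P) (hI : I.IsHomogeneous 𝒜) (hJ : J.IsHomogeneous 𝒜)
    (hIJ : I ⊔ J = ⊤) : P ⊔ I = ⊤ ∨ P ⊔ J = ⊤ := by
  by_contra! h
  obtain ⟨M, hM, hPIM⟩ := (hP.1.sup hI).exists_isGradedMaximal_le h.1
  obtain ⟨M', hM', hPJM'⟩ := (hP.1.sup hJ).exists_isGradedMaximal_le h.2
  have hMM' : M = M' :=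
    (hG P hP).unique ⟨hM, le_sup_left.trans hPIM⟩ ⟨hM', le_sup_left.trans hPJM'⟩
  refine hM.2.1 (eq_top_iff.mpr (hIJ ▸ sup_le (le_sup_right.trans hPIM) ?_))
  exact hMM' ▸ le_sup_right.trans hPJM'

theorem IsGelfandGraded.exists_one_add_mul_mul_one_add_mul_eq_zero (hG : IsGelfandGraded 𝒜)
    {a b : R} (ha : a ∈ 𝒜 0) (hb : b ∈ 𝒜 0) (hab : a + b = 1) :
    ∃ x ∈ 𝒜 0, ∃ y ∈ 𝒜 0, (1 + a * x) * (1 + b * y) = 0 := by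
  by_contra! h
  set S := oneAddMulGradeZero 𝒜 ha ⊔ oneAddMulGradeZero 𝒜 hb
  have hS : (0 : R) ∉ S := fun h0 => by
    obtain ⟨_, ⟨x, hx, rfl⟩, _, ⟨y, hy, rfl⟩, hxy⟩ := Submonoid.mem_sup.mp h0
    exact h x hx y hy hxy
  obtain ⟨P, hP, hPS⟩ := exists_isGradedPrime_disjoint 𝒜 hS
  have proper {e : R} (he : e ∈ 𝒜 0) (heS : oneAddMulGradeZero 𝒜 he ≤ S) :
      P ⊔ Ideal.span {e} ≠ ⊤ := fun htop => by
    obtain ⟨x, hx, hxP⟩ := hP.1.exists_one_add_mul_mem_of_sup_span_eq_top he htop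
    exact Set.disjoint_left.mp hPS hxP (heS ⟨x, hx, rfl⟩)
  have hspan : Ideal.span {a} ⊔ Ideal.span {b} = ⊤ :=
    (Ideal.eq_top_iff_one _).mpr (hab ▸ Ideal.add_mem _
      (Ideal.mem_sup_left (Ideal.mem_span_singleton_self a))
      (Ideal.mem_sup_right (Ideal.mem_span_singleton_self b)))
  rcases hG.sup_eq_top_or_sup_eq_top hP (Ideal.isHomogeneous_span_singleton ⟨0, ha⟩)
    (Ideal.isHomogeneous_span_singleton ⟨0, hb⟩) hspan with htop | htop
  exacts [proper ha le_sup_left htop, proper hb le_sup_right htop]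

end Gelfand

section Statements

variable {G : Type*} [AddGroup G] [DecidableEq G] {R : Type*} [CommRing R]
variable (𝒜 : G → AddSubgroup R) [GradedRing 𝒜]

theorem stmt_5 : IsGelfandGraded 𝒜 ↔
    ∀ F F' : Set (GMax 𝒜 : Set (GSpec 𝒜)), IsClosed F → IsClosed F' → Disjoint F F' →
      ∃ r r' : R, SetLike.IsHomogeneousElem 𝒜 r ∧ SetLike.IsHomogeneousElem 𝒜 r' ∧ r * r' = 0 ∧
        (∀ M ∈ F, r ∉ (M : GSpec 𝒜).1) ∧ ∀ M' ∈ F', r' ∉ (M' : GSpec 𝒜).1 := by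
  refine ⟨fun hG F F' hF hF' hFF' => ?_, fun h P hP => ?_⟩
  · obtain ⟨_, hC, rfl⟩ := isClosed_induced_iff.mp hF
    obtain ⟨_, hC', rfl⟩ := isClosed_induced_iff.mp hF'
    obtain ⟨I, hI, rfl⟩ := hC.exists_eq_zeroLocus
    obtain ⟨J, hJ, rfl⟩ := hC'.exists_eq_zeroLocus
    obtain ⟨a, b, ha, hb, haI, hbJ, hab⟩ :=
      hI.exists_add_eq_one_of_sup_eq_top hJ (GSpec.sup_eq_top_of_disjoint_gMax hI hJ hFF')
    obtain ⟨x, hx, y, hy, hxy⟩ := hG.exists_one_add_mul_mul_one_add_mul_eq_zero ha hb hab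
    exact ⟨_, _, ⟨0, one_add_mul_mem_grade_zero ha hx⟩,
      ⟨0, one_add_mul_mem_grade_zero hb hy⟩, hxy,
      fun M hM => Ideal.one_add_mul_notMem M.1.2.2.1 (hM haI) x,
      fun M hM => Ideal.one_add_mul_notMem M.1.2.2.1 (hM hbJ) y⟩
  · obtain ⟨M, hM, hPM⟩ := hP.1.exists_isGradedMaximal_le hP.2.1
    refine ⟨M, ⟨hM, hPM⟩, fun M' ⟨hM', hPM'⟩ => of_not_not fun hne => ?_⟩
    let m : GMax 𝒜 := ⟨⟨M, hM.isGradedPrime⟩, hM⟩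
    let m' : GMax 𝒜 := ⟨⟨M', hM'.isGradedPrime⟩, hM'⟩
    obtain ⟨r, r', hr, hr', hrr', hrm', hr'm⟩ :=
      h {m'} {m} isClosed_singleton isClosed_singleton
        (Set.disjoint_singleton.mpr fun hmm' => hne (congrArg (·.1.1) hmm'))
    rcases hP.2.2 r r' hr hr' (hrr' ▸ P.zero_mem) with hrP | hr'P
    exacts [hrm' m' rfl (hPM' hrP), hr'm m rfl (hPM hr'P)]

end Statements
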